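/- arXiv:1104.4752 — 2 statements merged into one kernel-verified Lean document; each statement's English description precedes it below -/
import Mathlib

section
/- Let k be a finite field with q elements and characteristic 2, let X be a nonempty type, and fix x ∈ X. For each integer t ≥ 1 let W̃_t denote the T-space of k⟨X⟩ generated by {ι(x) + ι(x)^q, ι(x)^(q^t + 1)}. Then for all nonnegative integers n, m with n ≠ m, W̃_(q^n) + W̃_(q^m) = k⟨X⟩. -/
/-- A T-space of the free unital associative algebra `k⟨X⟩`: a `k`-submodule invariant
under every `k`-algebra endomorphism of `k⟨X⟩`. -/
def IsTSpaceF (k X : Type*) [Field k] (V : Submodule k (FreeAlgebra k X)) : Prop :=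
  ∀ φ : FreeAlgebra k X →ₐ[k] FreeAlgebra k X, ∀ v ∈ V, φ v ∈ V

/-- The T-space of `k⟨X⟩` generated by a set `S`. -/
def TSpaceGenF (k X : Type*) [Field k] (S : Set (FreeAlgebra k X)) :
    Submodule k (FreeAlgebra k X) :=
  sInf {V | IsTSpaceF k X V ∧ S ⊆ (V : Set (FreeAlgebra k X))}

/-- A T-ideal of `k⟨X⟩`: a two-sided ideal that is also a T-space. -/
def IsTIdealF (k X : Type*) [Field k] (V : Submodule k (FreeAlgebra k X)) : Prop :=
  IsTSpaceF k X V ∧ ∀ a ∈ V, ∀ r : FreeAlgebra k X, r * a ∈ V ∧ a * r ∈ V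

/-- The T-ideal of `k⟨X⟩` generated by a set `S`. -/
def TIdealGenF (k X : Type*) [Field k] (S : Set (FreeAlgebra k X)) :
    Submodule k (FreeAlgebra k X) :=
  sInf {V | IsTIdealF k X V ∧ S ⊆ (V : Set (FreeAlgebra k X))}

/-- `T⁽²⁾`: the smallest T-ideal of `k⟨X⟩` containing all commutators `ab - ba`. -/
def T2 (k X : Type*) [Field k] : Submodule k (FreeAlgebra k X) :=
  sInf {V | IsTIdealF k X V ∧ ∀ a b : FreeAlgebra k X, a * b - b * a ∈ V}

section Aux

variable {k X : Type*} [Field k]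

theorem mem_TSpaceGenF {S : Set (FreeAlgebra k X)} {s : FreeAlgebra k X} (hs : s ∈ S) :
    s ∈ TSpaceGenF k X S := by
  simp only [TSpaceGenF, Submodule.mem_sInf]
  exact fun V hV => hV.2 hs

theorem isTSpace_TSpaceGenF (S : Set (FreeAlgebra k X)) :
    IsTSpaceF k X (TSpaceGenF k X S) := by
  intro φ v hv
  simp only [TSpaceGenF, Submodule.mem_sInf] at hv ⊢
  exact fun V hV => hV.1 φ v (hv V hV)

/-- The main computation: if `t < t'`, `2t ∣ t'`, and `q = 2^e`, then the sum of the
two T-spaces is everything. -/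
theorem Wtilde_main (h2 : ringChar k = 2) (x : X) (q e t t' : ℕ)
    (hqe : q = 2 ^ e) (he : 1 ≤ e) (ht : 1 ≤ t) (htt : t < t') (hdvd : 2 * t ∣ t') :
    TSpaceGenF k X {FreeAlgebra.ι k x + (FreeAlgebra.ι k x) ^ q,
        (FreeAlgebra.ι k x) ^ (q ^ t + 1)} ⊔
      TSpaceGenF k X {FreeAlgebra.ι k x + (FreeAlgebra.ι k x) ^ q,
        (FreeAlgebra.ι k x) ^ (q ^ t' + 1)} = ⊤ := by
  haveI hk2 : CharP k 2 := h2 ▸ ringChar.charP k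
  haveI : Fact (Nat.Prime 2) := ⟨Nat.prime_two⟩
  haveI : CharP (FreeAlgebra k X) 2 :=
    charP_of_injective_algebraMap FreeAlgebra.algebraMap_leftInverse.injective 2
  set u : FreeAlgebra k X := FreeAlgebra.ι k x with hu
  have hq2 : 2 ≤ q := by
    rw [hqe]
    calc 2 = 2 ^ 1 := by norm_num
    _ ≤ 2 ^ e := Nat.pow_le_pow_right (by norm_num) he
  -- substitution instances of the generators
  have hsub1 : ∀ (s : ℕ) (w : FreeAlgebra k X),
      w + w ^ q ∈ TSpaceGenF k X {u + u ^ q, u ^ (q ^ s + 1)} := by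
    intro s w
    have h0 : u + u ^ q ∈ TSpaceGenF k X {u + u ^ q, u ^ (q ^ s + 1)} :=
      mem_TSpaceGenF (Set.mem_insert _ _)
    have := isTSpace_TSpaceGenF {u + u ^ q, u ^ (q ^ s + 1)}
      (FreeAlgebra.lift k fun _ => w) _ h0
    simpa [hu, FreeAlgebra.lift_ι_apply] using this
  have hsub2 : ∀ (s : ℕ) (w : FreeAlgebra k X),
      w ^ (q ^ s + 1) ∈ TSpaceGenF k X {u + u ^ q, u ^ (q ^ s + 1)} := by
    intro s w
    have h0 : u ^ (q ^ s + 1) ∈ TSpaceGenF k X {u + u ^ q, u ^ (q ^ s + 1)} :=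
      mem_TSpaceGenF (Set.mem_insert_of_mem _ rfl)
    have := isTSpace_TSpaceGenF {u + u ^ q, u ^ (q ^ s + 1)}
      (FreeAlgebra.lift k fun _ => w) _ h0
    simpa [hu, FreeAlgebra.lift_ι_apply] using this
  -- Frobenius
  have hfrob : ∀ (s a b : ℕ),
      (u ^ a + u ^ b) ^ (q ^ s) = u ^ (a * q ^ s) + u ^ (b * q ^ s) := by
    intro s a b
    have hc : Commute (u ^ a) (u ^ b) := (Commute.refl u).pow_pow a b
    have key : (u ^ a + u ^ b) ^ 2 ^ (e * s) = (u ^ a) ^ 2 ^ (e * s) + (u ^ b) ^ 2 ^ (e * s) :=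
      add_pow_char_pow_of_commute 2 (e*s) hc
    rw [hqe, ← pow_mul, pow_mul u a, pow_mul u b]
    exact key
  -- pair elements
  have hpair : ∀ (s a b : ℕ), u ^ (a * q ^ s + b) + u ^ (b * q ^ s + a) ∈
      TSpaceGenF k X {u + u ^ q, u ^ (q ^ s + 1)} := by
    intro s a b
    have hS := hsub2 s (u ^ a + u ^ b)
    have hA : u ^ (a * (q ^ s + 1)) ∈ TSpaceGenF k X {u + u ^ q, u ^ (q ^ s + 1)} := by
      simpa [← pow_mul] using hsub2 s (u ^ a)
    have hB : u ^ (b * (q ^ s + 1)) ∈ TSpaceGenF k X {u + u ^ q, u ^ (q ^ s + 1)} := by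
      simpa [← pow_mul] using hsub2 s (u ^ b)
    have hexp : (u ^ a + u ^ b) ^ (q ^ s + 1)
        = u ^ (a * (q ^ s + 1)) + u ^ (b * (q ^ s + 1))
          + (u ^ (a * q ^ s + b) + u ^ (b * q ^ s + a)) := by
      calc (u ^ a + u ^ b) ^ (q ^ s + 1)
          = (u ^ a + u ^ b) ^ (q ^ s) * (u ^ a + u ^ b) := by rw [pow_succ]
        _ = (u ^ (a * q ^ s) + u ^ (b * q ^ s)) * (u ^ a + u ^ b) := by rw [hfrob]
        _ = u ^ (a * q ^ s + a) + u ^ (a * q ^ s + b)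
            + (u ^ (b * q ^ s + a) + u ^ (b * q ^ s + b)) := by
            rw [add_mul, mul_add, mul_add, ← pow_add, ← pow_add, ← pow_add, ← pow_add]
        _ = _ := by
            rw [mul_add a, mul_add b, mul_one, mul_one]
            abel
    have hmem : u ^ (a * q ^ s + b) + u ^ (b * q ^ s + a)
        = (u ^ a + u ^ b) ^ (q ^ s + 1) - u ^ (a * (q ^ s + 1)) - u ^ (b * (q ^ s + 1)) := by
      rw [hexp]; abel
    rw [hmem]
    exact Submodule.sub_mem _ (Submodule.sub_mem _ hS hA) hB
  -- chain
  have hchain : ∀ (s j : ℕ), u + u ^ (q ^ j) ∈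
      TSpaceGenF k X {u + u ^ q, u ^ (q ^ s + 1)} := by
    intro s j
    induction j with
    | zero =>
        have : u + u ^ (q ^ 0) = 0 := by
          rw [pow_zero, pow_one]; exact CharTwo.add_self_eq_zero u
        rw [this]; exact Submodule.zero_mem _
    | succ j ih =>
        have h2' := hsub1 s (u ^ (q ^ j))
        have heq : u + u ^ (q ^ (j + 1))
            = (u + u ^ (q ^ j)) + (u ^ (q ^ j) + (u ^ (q ^ j)) ^ q) := by
          rw [← pow_mul, ← pow_succ]
          calc u + u ^ (q ^ (j + 1))
              = u + (u ^ (q ^ j) + u ^ (q ^ j)) + u ^ (q ^ (j + 1)) := by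
                rw [CharTwo.add_self_eq_zero, add_zero]
            _ = _ := by abel
        rw [heq]
        exact Submodule.add_mem _ ih h2'
  -- number theory
  set N : ℕ := q ^ t' + 1 with hN
  haveI : NeZero N := ⟨by positivity⟩
  obtain ⟨s2, hs2⟩ := hdvd
  have hq2dvd : 2 ∣ q := hqe ▸ dvd_pow_self 2 (by omega)
  have ht'pos : 0 < t' := by omega
  have hNodd : ¬ 2 ∣ N := by
    have h1 : 2 ∣ q ^ t' := dvd_pow hq2dvd ht'pos.ne'
    omega
  have hcop : Nat.Coprime (q ^ (2 * t) - 1) N := by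
    set d := Nat.gcd (q ^ (2 * t) - 1) N with hd
    have hd1 : d ∣ q ^ (2 * t) - 1 := Nat.gcd_dvd_left _ _
    have hd2 : d ∣ N := Nat.gcd_dvd_right _ _
    have h3 : d ∣ q ^ t' - 1 := by
      refine hd1.trans ?_
      have := Nat.sub_dvd_pow_sub_pow (q ^ (2 * t)) 1 s2
      rwa [one_pow, ← pow_mul, ← hs2] at this
    have hqt1 : 1 ≤ q ^ t' := Nat.one_le_pow _ _ (by omega)
    have h4 : d ∣ 2 := by
      have := Nat.dvd_sub hd2 h3
      have hnn : N - (q ^ t' - 1) = 2 := by omega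
      rwa [hnn] at this
    rcases (Nat.dvd_prime Nat.prime_two).1 h4 with h | h
    · exact h
    · exact absurd (h ▸ hd2) hNodd
  -- the coefficient a
  set a0 : ZMod N := (((ZMod.unitOfCoprime _ hcop)⁻¹ : (ZMod N)ˣ) : ZMod N) with ha0
  set a : ℕ := a0.val + N with ha
  have hq2t1 : 1 ≤ q ^ (2 * t) := Nat.one_le_pow _ _ (by omega)
  have hac : (a : ZMod N) * ((q : ZMod N) ^ (2 * t) - 1) = 1 := by
    have hcast : ((q ^ (2 * t) - 1 : ℕ) : ZMod N) = (q : ZMod N) ^ (2 * t) - 1 := by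
      rw [Nat.cast_sub hq2t1]; push_cast; ring
    have hcasta : ((a : ℕ) : ZMod N) = a0 := by
      rw [ha]
      push_cast [ZMod.natCast_self]
      rw [ZMod.natCast_val, ZMod.cast_id, add_zero]
    rw [hcasta, ← hcast, ← ZMod.coe_unitOfCoprime _ hcop, ha0]
    exact_mod_cast Units.inv_mul (ZMod.unitOfCoprime _ hcop)
  -- exponents
  set K : ℕ := t' + t + 2 with hK
  set j : ℕ := 2 * t' * K - t with hj0
  have hjK : j + t = 2 * t' * K := by
    have : t ≤ 2 * t' * K := by nlinarith
    omega
  have hjge : t' + 2 + t ≤ j := by nlinarith [hjK]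
  have hvala : a0.val < N := ZMod.val_lt a0
  have haN : a ≤ 2 * N := by omega
  have hq4 : 4 ≤ q ^ 2 := by nlinarith
  have h2N : 2 * N ≤ q ^ (t' + 2) := by
    have h1 : 1 ≤ q ^ t' := Nat.one_le_pow _ _ (by omega)
    have : q ^ (t' + 2) = q ^ t' * q ^ 2 := by rw [pow_add]
    nlinarith
  have ha_le : a * q ^ t ≤ q ^ j := by
    calc a * q ^ t ≤ q ^ (t' + 2) * q ^ t := Nat.mul_le_mul_right _ (le_trans haN h2N)
      _ = q ^ (t' + 2 + t) := by rw [← pow_add]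
      _ ≤ q ^ j := Nat.pow_le_pow_right (by omega) hjge
  set b : ℕ := q ^ j - a * q ^ t with hb0
  have hab : a * q ^ t + b = q ^ j := by omega
  set g : ℕ := b * q ^ t + a with hg0
  -- divisibility
  have hNg : N ∣ g := by
    rw [← ZMod.natCast_eq_zero_iff]
    have hqt' : (q : ZMod N) ^ t' = -1 := by
      have h0 : ((N : ℕ) : ZMod N) = 0 := ZMod.natCast_self N
      rw [hN] at h0
      push_cast at h0
      linear_combination h0
    have hq2t' : (q : ZMod N) ^ (2 * t') = 1 := by
      rw [two_mul, pow_add, hqt']; ring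
    have hqjt : (q : ZMod N) ^ (j + t) = 1 := by
      rw [hjK, pow_mul, hq2t', one_pow]
    have hbcast : ((b : ℕ) : ZMod N) = (q : ZMod N) ^ j - (a : ZMod N) * (q : ZMod N) ^ t := by
      rw [hb0, Nat.cast_sub ha_le]; push_cast; ring
    calc ((g : ℕ) : ZMod N) = (b : ZMod N) * (q : ZMod N) ^ t + (a : ZMod N) := by
          rw [hg0]; push_cast; ring
      _ = (q : ZMod N) ^ (j + t) - (a : ZMod N) * ((q : ZMod N) ^ (2 * t) - 1) := by
          rw [hbcast, pow_add, two_mul, pow_add]; ring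
      _ = 1 - 1 := by rw [hqjt, hac]
      _ = 0 := by ring
  obtain ⟨hh, hgh⟩ := hNg
  -- memberships
  have m1 : u ^ (q ^ j) + u ^ g ∈ TSpaceGenF k X {u + u ^ q, u ^ (q ^ t + 1)} := by
    have := hpair t a b
    rwa [hab] at this
  have m2 : u + u ^ (q ^ j) ∈ TSpaceGenF k X {u + u ^ q, u ^ (q ^ t + 1)} := hchain t j
  have m3 : u + u ^ g ∈ TSpaceGenF k X {u + u ^ q, u ^ (q ^ t + 1)} := by
    have heq : u + u ^ g = (u + u ^ (q ^ j)) + (u ^ (q ^ j) + u ^ g) := by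
      calc u + u ^ g = u + (u ^ (q ^ j) + u ^ (q ^ j)) + u ^ g := by
            rw [CharTwo.add_self_eq_zero, add_zero]
        _ = _ := by abel
    rw [heq]
    exact Submodule.add_mem _ m2 m1
  have m4 : u ^ g ∈ TSpaceGenF k X {u + u ^ q, u ^ (q ^ t' + 1)} := by
    have hpow : (u ^ hh) ^ (q ^ t' + 1) = u ^ g := by
      rw [← pow_mul]
      congr 1
      rw [hgh, hN]
      ring
    have := hsub2 t' (u ^ hh)
    rwa [hpow] at this
  have m5 : u ∈ TSpaceGenF k X {u + u ^ q, u ^ (q ^ t + 1)} ⊔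
      TSpaceGenF k X {u + u ^ q, u ^ (q ^ t' + 1)} := by
    have heq : u = (u + u ^ g) + u ^ g := by
      rw [add_assoc, CharTwo.add_self_eq_zero, add_zero]
    have hmem := Submodule.add_mem _ (Submodule.mem_sup_left m3) (Submodule.mem_sup_right m4)
    rwa [← heq] at hmem
  -- conclude
  rw [eq_top_iff]
  intro z _
  have hsupT : IsTSpaceF k X (TSpaceGenF k X {u + u ^ q, u ^ (q ^ t + 1)} ⊔
      TSpaceGenF k X {u + u ^ q, u ^ (q ^ t' + 1)}) := by
    intro φ v hv
    obtain ⟨v1, h1, v2, hh2, rfl⟩ := Submodule.mem_sup.1 hv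
    rw [map_add]
    exact Submodule.add_mem _
      (Submodule.mem_sup_left (isTSpace_TSpaceGenF _ φ v1 h1))
      (Submodule.mem_sup_right (isTSpace_TSpaceGenF _ φ v2 hh2))
  have := hsupT (FreeAlgebra.lift k fun _ => z) u m5
  simpa [hu, FreeAlgebra.lift_ι_apply] using this

end Aux

/-- For a finite field `k` with `q` elements and characteristic 2, with `W̃ₜ` the
T-space of `k⟨X⟩` generated by `{ι(x) + ι(x)^q, ι(x)^(qᵗ+1)}`, one has
`W̃_(qⁿ) + W̃_(qᵐ) = k⟨X⟩` for `n ≠ m`. -/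
theorem Wtilde_sup_eq_top (k : Type*) [Field k] [Fintype k] (q : ℕ)
    (hq : Fintype.card k = q) (h2 : ringChar k = 2)
    (X : Type*) [Nonempty X] (x : X) (n m : ℕ) (hnm : n ≠ m) :
    TSpaceGenF k X {FreeAlgebra.ι k x + (FreeAlgebra.ι k x) ^ q,
        (FreeAlgebra.ι k x) ^ (q ^ (q ^ n) + 1)} ⊔
      TSpaceGenF k X {FreeAlgebra.ι k x + (FreeAlgebra.ι k x) ^ q,
        (FreeAlgebra.ι k x) ^ (q ^ (q ^ m) + 1)} = ⊤ := by
  haveI hk2 : CharP k 2 := h2 ▸ ringChar.charP k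
  obtain ⟨e, -, hcard⟩ := FiniteField.card k 2
  have hqe : q = 2 ^ (e : ℕ) := by rw [← hq, hcard]
  have he : 1 ≤ (e : ℕ) := e.one_le
  have hq2 : 2 ≤ q := by
    rw [hqe]
    calc 2 = 2 ^ 1 := by norm_num
    _ ≤ 2 ^ (e : ℕ) := Nat.pow_le_pow_right (by norm_num) he
  have key : ∀ n' m' : ℕ, n' < m' →
      TSpaceGenF k X {FreeAlgebra.ι k x + (FreeAlgebra.ι k x) ^ q,
          (FreeAlgebra.ι k x) ^ (q ^ (q ^ n') + 1)} ⊔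
        TSpaceGenF k X {FreeAlgebra.ι k x + (FreeAlgebra.ι k x) ^ q,
          (FreeAlgebra.ι k x) ^ (q ^ (q ^ m') + 1)} = ⊤ := by
    intro n' m' hlt
    refine Wtilde_main h2 x q e (q ^ n') (q ^ m') hqe he ?_ ?_ ?_
    · exact Nat.one_le_pow _ _ (by omega)
    · exact Nat.pow_lt_pow_right (by omega) hlt
    · refine ⟨2 ^ ((e : ℕ) * m' - ((e : ℕ) * n' + 1)), ?_⟩
      have hle : (e : ℕ) * n' + (e : ℕ) ≤ (e : ℕ) * m' := by
        have := Nat.mul_le_mul_left (e : ℕ) (by omega : n' + 1 ≤ m')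
        simpa [Nat.mul_add] using this
      rw [hqe, ← pow_mul, ← pow_mul]
      rw [show (2 : ℕ) * 2 ^ ((e : ℕ) * n') = 2 ^ ((e : ℕ) * n' + 1) by rw [pow_succ]; ring]
      rw [← pow_add]
      congr 1
      omega
  rcases hnm.lt_or_gt with h | h
  · exact key n m h
  · rw [sup_comm]
    exact key m n h
end

section
/- Let k be a finite field of characteristic 2 and let X be a nonempty type. Then k⟨X⟩ has infinitely many maximal T-spaces; that is, the set of maximal T-spaces of k⟨X⟩ is infinite. -/
section Aux

variable {k : Type*} [Field k] [Fintype k]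

/-- The `q`-power Frobenius (`q = Fintype.card k`) as a `k`-linear endomorphism of a
commutative `k`-algebra of characteristic 2. -/
noncomputable def frobq (h2 : ringChar k = 2) (M : Type*) [CommRing M] [Algebra k M]
    [CharP M 2] : Module.End k M where
  toFun u := u ^ Fintype.card k
  map_add' x y := by
    haveI : CharP k 2 := h2 ▸ ringChar.charP k
    obtain ⟨n, hp, hcard⟩ := FiniteField.card k 2
    haveI : Fact (Nat.Prime 2) := ⟨hp⟩
    rw [hcard]
    exact add_pow_char_pow x y 2 (n : ℕ)
  map_smul' c u := by
    simp only [RingHom.id_apply]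
    rw [_root_.smul_pow, FiniteField.pow_card]

lemma frobq_apply (h2 : ringChar k = 2) (M : Type*) [CommRing M] [Algebra k M]
    [CharP M 2] (u : M) : frobq h2 M u = u ^ Fintype.card k := rfl

lemma frobq_pow_apply (h2 : ringChar k = 2) (M : Type*) [CommRing M] [Algebra k M]
    [CharP M 2] (n : ℕ) (u : M) : (frobq h2 M ^ n) u = u ^ (Fintype.card k ^ n) := by
  induction n with
  | zero => simp
  | succ n ih =>
      rw [pow_succ', Module.End.mul_apply, ih, frobq_apply, ← pow_mul, pow_succ]

/-- Algebra homomorphisms commute with the operators `λ(frobenius)`. -/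
lemma frobq_aeval_comm (h2 : ringChar k = 2) {M N : Type*} [CommRing M] [Algebra k M]
    [CharP M 2] [CommRing N] [Algebra k N] [CharP N 2] (g : M →ₐ[k] N)
    (lam : Polynomial k) (u : M) :
    g ((Polynomial.aeval (frobq h2 M) lam) u) = (Polynomial.aeval (frobq h2 N) lam) (g u) := by
  induction lam using Polynomial.induction_on' with
  | add p q hp hq => simp [map_add, LinearMap.add_apply, hp, hq]
  | monomial n c =>
      rw [Polynomial.aeval_monomial, Polynomial.aeval_monomial,
        Module.End.mul_apply, Module.End.mul_apply,
        Module.algebraMap_end_apply, Module.algebraMap_end_apply,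
        frobq_pow_apply, frobq_pow_apply, map_smul, map_pow]

end Aux

section Fermat

variable (k : Type*) [Field k]

/-- Cumulative products for the Sylvester–Fermat sequence of polynomials. -/
noncomputable def fermatB : ℕ → Polynomial k
  | 0 => Polynomial.X
  | n + 1 => fermatB n * (fermatB n + 1)

/-- A pairwise Bézout-coprime sequence of monic nonconstant polynomials. -/
noncomputable def fermatE : ℕ → Polynomial k
  | 0 => Polynomial.X
  | n + 1 => fermatB k n + 1

lemma fermatB_monic_deg (n : ℕ) : (fermatB k n).Monic ∧ 1 ≤ (fermatB k n).natDegree := by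
  induction n with
  | zero => exact ⟨Polynomial.monic_X, by simp [fermatB]⟩
  | succ n ih =>
      obtain ⟨hm, hd⟩ := ih
      have hdeg : (0 : WithBot ℕ) < (fermatB k n).degree := by
        rw [← Polynomial.natDegree_pos_iff_degree_pos]
        omega
      have hm1 : (fermatB k n + 1).Monic := by
        refine hm.add_of_left ?_
        simpa [Polynomial.degree_one] using hdeg
      constructor
      · exact hm.mul hm1
      · rw [fermatB, Polynomial.natDegree_mul hm.ne_zero hm1.ne_zero]
        omega

lemma fermatE_monic (n : ℕ) : (fermatE k n).Monic := by
  cases n with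
  | zero => exact Polynomial.monic_X
  | succ n =>
      obtain ⟨hm, hd⟩ := fermatB_monic_deg k n
      have hdeg : (0 : WithBot ℕ) < (fermatB k n).degree := by
        rw [← Polynomial.natDegree_pos_iff_degree_pos]; omega
      exact hm.add_of_left (by simpa [Polynomial.degree_one] using hdeg)

lemma fermatE_natDegree (n : ℕ) : 1 ≤ (fermatE k n).natDegree := by
  cases n with
  | zero => simp [fermatE]
  | succ n =>
      obtain ⟨hm, hd⟩ := fermatB_monic_deg k n
      have : (fermatE k (n+1)).natDegree = (fermatB k n).natDegree := by
        rw [fermatE, ← Polynomial.C_1, Polynomial.natDegree_add_C]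
      omega

lemma fermatE_dvd_fermatB {m n : ℕ} (h : m ≤ n) : fermatE k m ∣ fermatB k n := by
  induction n with
  | zero =>
      interval_cases m
      exact dvd_refl _
  | succ n ih =>
      rcases Nat.lt_or_ge m (n+1) with hlt | hge
      · exact (ih (by omega)).trans (Dvd.intro _ rfl)
      · have hm : m = n + 1 := by omega
        subst hm
        rw [fermatB]
        exact Dvd.intro_left _ rfl

lemma fermat_bezout {m n : ℕ} (h : m < n) :
    ∃ c : Polynomial k, fermatE k n - fermatE k m * c = 1 := by
  obtain ⟨n', rfl⟩ : ∃ n', n = n' + 1 := ⟨n - 1, by omega⟩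
  obtain ⟨c, hc⟩ := fermatE_dvd_fermatB k (show m ≤ n' by omega)
  exact ⟨c, by rw [fermatE, ← hc]; ring⟩

end Fermat

section Properness

variable {k : Type*} [Field k] [Fintype k]

/-- `X` is not in the image of the operator `λ(frobenius)` on `k[X]` for monic nonconstant `λ`. -/
lemma aeval_frobq_ne_X [CharP k 2] (h2 : ringChar k = 2) {lam : Polynomial k}
    (hm : lam.Monic) (hd : 1 ≤ lam.natDegree) (u : Polynomial k) :
    (Polynomial.aeval (frobq h2 (Polynomial k)) lam) u ≠ Polynomial.X := by
  intro H
  set q := Fintype.card k with hqdef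
  have hq2 : 2 ≤ q := Fintype.one_lt_card
  set A := lam.natDegree with hA
  have expand : (Polynomial.aeval (frobq h2 (Polynomial k)) lam) u
      = ∑ i ∈ Finset.range (A + 1), lam.coeff i • u ^ q ^ i := by
    rw [Polynomial.aeval_eq_sum_range (x := frobq h2 (Polynomial k)) (p := lam)]
    rw [LinearMap.sum_apply]
    refine Finset.sum_congr rfl fun i _ => ?_
    rw [LinearMap.smul_apply, frobq_pow_apply]
  rw [expand] at H
  by_cases hu : u.natDegree = 0
  · obtain ⟨c, rfl⟩ : ∃ c, u = Polynomial.C c :=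
      ⟨u.coeff 0, Polynomial.eq_C_of_natDegree_eq_zero hu⟩
    have : ∑ i ∈ Finset.range (A + 1), lam.coeff i • (Polynomial.C c) ^ q ^ i
        = Polynomial.C (∑ i ∈ Finset.range (A + 1), lam.coeff i * c ^ q ^ i) := by
      rw [map_sum]
      refine Finset.sum_congr rfl fun i _ => ?_
      rw [← map_pow, Polynomial.smul_C, smul_eq_mul]
    rw [this] at H
    exact Polynomial.X_ne_C _ H.symm
  · have hd1 : 1 ≤ u.natDegree := by omega
    have hcoe : lam.coeff A = 1 := hm.coeff_natDegree
    rw [Finset.sum_range_succ, hcoe, one_smul] at H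
    have htop : (u ^ q ^ A).natDegree = q ^ A * u.natDegree :=
      Polynomial.natDegree_pow u _
    have hr : (∑ i ∈ Finset.range A, lam.coeff i • u ^ q ^ i).natDegree
        < q ^ A * u.natDegree := by
      have hle : ∀ i ∈ Finset.range A,
          (lam.coeff i • u ^ q ^ i).natDegree ≤ q ^ (A - 1) * u.natDegree := by
        intro i hi
        rw [Finset.mem_range] at hi
        refine (Polynomial.natDegree_smul_le _ _).trans ?_
        rw [Polynomial.natDegree_pow]
        exact Nat.mul_le_mul_right _ (Nat.pow_le_pow_right (by omega) (by omega))
      refine (Polynomial.natDegree_sum_le_of_forall_le _ _ hle).trans_lt ?_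
      have : q ^ (A - 1) < q ^ A := Nat.pow_lt_pow_right (by omega) (by omega)
      exact Nat.mul_lt_mul_of_lt_of_le this le_rfl (by omega)
    have hdeg : (∑ i ∈ Finset.range A, lam.coeff i • u ^ q ^ i + u ^ q ^ A).natDegree
        = q ^ A * u.natDegree := by
      rw [add_comm, Polynomial.natDegree_add_eq_left_of_natDegree_lt (by omega), htop]
    rw [H, Polynomial.natDegree_X] at hdeg
    have hqA : q ≤ q ^ A := by
      calc q = q ^ 1 := (pow_one q).symm
      _ ≤ q ^ A := Nat.pow_le_pow_right (by omega) hd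
    nlinarith [hd1, hq2, hqA]

end Properness

/-- If `k` is a finite field of characteristic 2 and `X` is nonempty, then `k⟨X⟩`
has infinitely many maximal T-spaces. -/
theorem infinitely_many_maximal_TSpacesF_char2 (k : Type*) [Field k] [Fintype k]
    (h2 : ringChar k = 2) (X : Type*) [Nonempty X] :
    {V : Submodule k (FreeAlgebra k X) | IsTSpaceF k X V ∧ V ≠ ⊤ ∧
      ∀ U : Submodule k (FreeAlgebra k X), IsTSpaceF k X U → V ≤ U → U ≠ ⊤ →
        U = V}.Infinite := by
  classical
  haveI : CharP k 2 := h2 ▸ ringChar.charP k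
  obtain ⟨x₀⟩ := ‹Nonempty X›
  -- the abelianization map
  let π : FreeAlgebra k X →ₐ[k] MvPolynomial X k :=
    FreeAlgebra.lift k (fun i => MvPolynomial.X i)
  have hπX : ∀ i, π (FreeAlgebra.ι k i) = MvPolynomial.X i :=
    fun i => FreeAlgebra.lift_ι_apply _ _
  have hπ : Function.Surjective π := by
    intro y
    have hy : y ∈ π.range := by
      have htop : (⊤ : Subalgebra k (MvPolynomial X k)) ≤ π.range := by
        rw [← MvPolynomial.adjoin_range_X]
        refine Algebra.adjoin_le ?_
        rintro _ ⟨i, rfl⟩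
        exact ⟨FreeAlgebra.ι k i, hπX i⟩
      exact htop trivial
    exact hy
  -- any T-space containing a generator is everything
  have htop : ∀ U : Submodule k (FreeAlgebra k X), IsTSpaceF k X U →
      FreeAlgebra.ι k x₀ ∈ U → U = ⊤ := by
    intro U hU hx
    rw [eq_top_iff]
    intro w _
    have := hU (FreeAlgebra.lift k (fun _ => w)) _ hx
    simpa using this
  let f := frobq h2 (MvPolynomial X k)
  -- the comaximal family of proper T-spaces
  let V : ℕ → Submodule k (FreeAlgebra k X) := fun n =>
    (LinearMap.range (Polynomial.aeval f (fermatE k n) :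
      Module.End k (MvPolynomial X k))).comap π.toLinearMap
  have hVmem : ∀ n (v : FreeAlgebra k X), v ∈ V n ↔
      π v ∈ LinearMap.range (Polynomial.aeval f (fermatE k n) :
        Module.End k (MvPolynomial X k)) := by
    intro n v
    simp [V, Submodule.mem_comap]
  have hVT : ∀ n, IsTSpaceF k X (V n) := by
    intro n φ v hv
    rw [hVmem] at hv ⊢
    obtain ⟨u, hu⟩ := hv
    let ψ : MvPolynomial X k →ₐ[k] MvPolynomial X k :=
      MvPolynomial.aeval (fun i => π (φ (FreeAlgebra.ι k i)))
    have hfac : π.comp φ = ψ.comp π := by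
      apply FreeAlgebra.hom_ext
      funext i
      simp [ψ, hπX]
    have hπφ : π (φ v) = ψ (π v) := by
      simpa using DFunLike.congr_fun hfac v
    rw [hπφ, ← hu, frobq_aeval_comm h2 ψ]
    exact ⟨ψ u, rfl⟩
  have hVproper : ∀ n, FreeAlgebra.ι k x₀ ∉ V n := by
    intro n hmem
    rw [hVmem] at hmem
    obtain ⟨u, hu⟩ := hmem
    let ev1 : MvPolynomial X k →ₐ[k] Polynomial k :=
      MvPolynomial.aeval (fun _ => Polynomial.X)
    apply aeval_frobq_ne_X h2 (fermatE_monic k n) (fermatE_natDegree k n) (ev1 u)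
    rw [← frobq_aeval_comm h2 ev1, hu, hπX]
    simp [ev1]
  have hVsup : ∀ m n : ℕ, m < n → V n ⊔ V m = ⊤ := by
    intro m n hmn
    rw [eq_top_iff]
    intro w _
    obtain ⟨c, hc⟩ := fermat_bezout k hmn
    have hid : π w = (Polynomial.aeval f (fermatE k n)) (π w)
        - (Polynomial.aeval f (fermatE k m)) ((Polynomial.aeval f c) (π w)) := by
      have h1 : ((Polynomial.aeval f (fermatE k n) :
          Module.End k (MvPolynomial X k)) -
          Polynomial.aeval f (fermatE k m) * Polynomial.aeval f c) (π w) = π w := by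
        rw [← map_mul, ← map_sub, hc, map_one, Module.End.one_apply]
      rw [LinearMap.sub_apply, Module.End.mul_apply] at h1
      exact h1.symm
    obtain ⟨wa, hwa⟩ := hπ ((Polynomial.aeval f (fermatE k n)) (π w))
    refine Submodule.mem_sup.mpr ⟨wa, ?_, w - wa, ?_, by abel⟩
    · rw [hVmem]
      exact ⟨π w, hwa.symm⟩
    · rw [hVmem]
      refine ⟨-(Polynomial.aeval f c) (π w), ?_⟩
      rw [map_neg, map_sub, hwa]
      linear_combination -hid
  -- Zorn's lemma: every `V n` is contained in a maximal T-space
  have hmaxex : ∀ n, ∃ Mn : Submodule k (FreeAlgebra k X),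
      V n ≤ Mn ∧ Mn ∈ {W : Submodule k (FreeAlgebra k X) | IsTSpaceF k X W ∧ W ≠ ⊤ ∧
        ∀ U : Submodule k (FreeAlgebra k X), IsTSpaceF k X U → W ≤ U → U ≠ ⊤ → U = W} := by
    intro n
    set S : Set (Submodule k (FreeAlgebra k X)) :=
      {U | IsTSpaceF k X U ∧ FreeAlgebra.ι k x₀ ∉ U} with hSdef
    have hVS : V n ∈ S := ⟨hVT n, hVproper n⟩
    have hchain : ∀ c ⊆ S, IsChain (· ≤ ·) c → ∀ y ∈ c, ∃ ub ∈ S, ∀ z ∈ c, z ≤ ub := by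
      intro c hcS hchain y hy
      refine ⟨sSup c, ⟨?_, ?_⟩, fun z hz => le_sSup hz⟩
      · intro φ v hv
        obtain ⟨W, hWc, hvW⟩ :=
          (Submodule.mem_sSup_of_directed ⟨y, hy⟩ hchain.directedOn).mp hv
        exact le_sSup hWc ((hcS hWc).1 φ v hvW)
      · intro hx
        obtain ⟨W, hWc, hxW⟩ :=
          (Submodule.mem_sSup_of_directed ⟨y, hy⟩ hchain.directedOn).mp hx
        exact (hcS hWc).2 hxW
    obtain ⟨Mn, hle, hmax⟩ := zorn_le_nonempty₀ S hchain (V n) hVS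
    refine ⟨Mn, hle, hmax.1.1, ?_, ?_⟩
    · intro htop'
      exact hmax.1.2 (htop' ▸ Submodule.mem_top)
    · intro U hU hMU hUne
      have hUx : FreeAlgebra.ι k x₀ ∉ U := fun hx => hUne (htop U hU hx)
      exact le_antisymm (hmax.2 ⟨hU, hUx⟩ hMU) hMU
  choose Mfun hMle hMmem using hmaxex
  refine Set.infinite_of_injective_forall_mem (f := Mfun) ?_ hMmem
  intro a b hab
  by_contra hne
  rcases lt_or_gt_of_ne hne with h | h
  · have hsup : V b ⊔ V a ≤ Mfun b := sup_le (hMle b) (hab ▸ hMle a)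
    rw [hVsup a b h] at hsup
    exact (hMmem b).2.1 (top_le_iff.mp hsup)
  · have hsup : V a ⊔ V b ≤ Mfun a := sup_le (hMle a) (hab ▸ hMle b)
    rw [hVsup b a h] at hsup
    exact (hMmem a).2.1 (top_le_iff.mp hsup)
end
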